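/- arXiv:2312.03925 — 5 statements merged into one kernel-verified Lean document; each statement's English description precedes it below -/
import Mathlib

section
/- Let D be an m×m matrix over Z/2Z and V an invertible upper triangular m×m matrix over Z/2Z with R = D·V. Then for every row index i and column index j, the rank of the lower-left submatrix R[≥ i, ≤ j] (rows i through m, columns 1 through j) equals the rank of the corresponding lower-left submatrix D[≥ i, ≤ j]. -/
open Matrix

/-- The lower-left submatrix `M[≥ i, ≤ j]`: rows `i, …, m` and columns `1, …, j`. -/
def lowerLeft {m : ℕ} (M : Matrix (Fin m) (Fin m) (ZMod 2)) (i j : Fin m) :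
    Matrix {i' : Fin m // i ≤ i'} {j' : Fin m // j' ≤ j} (ZMod 2) :=
  fun a b => M a.1 b.1

/-- Right multiplication by an invertible upper triangular matrix
(left-to-right column additions) preserves the ranks of all lower-left
submatrices. -/
theorem lowerLeft_rank_invariant {m : ℕ}
    (D V : Matrix (Fin m) (Fin m) (ZMod 2))
    (hVu : IsUnit V) (hVt : V.BlockTriangular id) :
    ∀ i j : Fin m, (lowerLeft (D * V) i j).rank = (lowerLeft D i j).rank := by
  intro i j
  set W : Matrix {j' : Fin m // j' ≤ j} {j' : Fin m // j' ≤ j} (ZMod 2) :=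
    fun a b => V a.1 b.1 with hW
  have hdet : IsUnit V.det := (Matrix.isUnit_iff_isUnit_det V).mp hVu
  rw [Matrix.det_of_upperTriangular hVt] at hdet
  have hdiag : ∀ k : Fin m, IsUnit (V k k) := fun k =>
    isUnit_of_dvd_unit (Finset.dvd_prod_of_mem (fun t => V t t) (Finset.mem_univ k)) hdet
  have hWt : W.BlockTriangular id := by
    intro a b h
    exact hVt (show (id b.1 : Fin m) < id a.1 from h)
  have hWdet : IsUnit W.det := by
    rw [Matrix.det_of_upperTriangular hWt]
    exact Finset.prod_induction _ IsUnit (fun a b ha hb => ha.mul hb) isUnit_one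
      (fun a _ => hdiag a.1)
  have key : lowerLeft (D * V) i j = lowerLeft D i j * W := by
    ext a b
    show (D * V) a.1 b.1 = _
    rw [Matrix.mul_apply, Matrix.mul_apply]
    have h1 : ∑ k ∈ Finset.univ.filter (fun k : Fin m => k ≤ j),
        D a.1 k * V k b.1 = ∑ k : Fin m, D a.1 k * V k b.1 := by
      apply Finset.sum_subset (Finset.subset_univ _)
      intro x _ hx
      simp only [Finset.mem_filter, Finset.mem_univ, true_and] at hx
      have : (id b.1 : Fin m) < id x := lt_of_le_of_lt b.2 (lt_of_not_ge hx)
      rw [hVt this, mul_zero]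
    rw [← h1]
    rw [Finset.sum_subtype (Finset.univ.filter (fun k : Fin m => k ≤ j))
      (p := fun k : Fin m => k ≤ j) (by simp)]
    rfl
  rw [key]
  exact Matrix.rank_mul_eq_left_of_isUnit_det W (lowerLeft D i j) hWdet
end

section
/- Let D be an m×m matrix over Z/2Z and let R = D·V be reduced, where V is invertible upper triangular. Then for every pair (i,j), column j of R is nonzero with pivot i if and only if rank(D[≥ i, ≤ j]) − rank(D[≥ i+1, ≤ j]) − rank(D[≥ i, ≤ j−1]) + rank(D[≥ i+1, ≤ j−1]) = 1. In particular, the pivot pairing of R is uniquely determined by D and does not depend on the choice of V. -/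
/-!
Right multiplication by `V` does not change the ranks of the lower-left blocks `D[≥ i, ≤ j]`:
restricted to the first columns, `(D * V)` is that block of `D` times the corresponding leading
block of `V`, which is again invertible because `V` is upper triangular. For the reduced matrix
`R = D * V`, the nonzero columns of a lower-left block keep their pivots, and columns with
distinct pivots are linearly independent, so the rank of `R[≥ i, ≤ j]` is the number of pivot
pairs in the quadrant `≥ i, ≤ j`. The alternating sum of four such counts is the number of pivot
pairs at the single position `(i, j)`.
-/

open Matrix

def IsPivot {m : ℕ} (M : Matrix (Fin m) (Fin m) (ZMod 2)) (i j : Fin m) : Prop :=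
  M i j ≠ 0 ∧ ∀ i' : Fin m, i < i' → M i' j = 0

def Reduced {m : ℕ} (M : Matrix (Fin m) (Fin m) (ZMod 2)) : Prop :=
  ∀ i j j' : Fin m, IsPivot M i j → IsPivot M i j' → j = j'

noncomputable def subRank {m : ℕ} (M : Matrix (Fin m) (Fin m) (ZMod 2))
    (P Q : Fin m → Prop) [DecidablePred P] [DecidablePred Q] : ℕ :=
  Matrix.rank (fun (a : {i : Fin m // P i}) (b : {j : Fin m // Q j}) => M a.1 b.1)

open Finset Submodule

theorem linearIndependent_of_injective_lastNonzero {ι n F : Type*} [LinearOrder n] [Ring F]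
    [NoZeroDivisors F] {v : ι → n → F} (p : ι → n) (hp : Function.Injective p)
    (hne : ∀ b, v b (p b) ≠ 0) (hzero : ∀ b a, p b < a → v b a = 0) :
    LinearIndependent F v := by
  classical
  rw [linearIndependent_iff']
  intro s g hsum b₀ hb₀
  by_contra hg₀
  -- for `b` with `g b ≠ 0` and `p b` maximal, only `g b • v b` is nonzero at coordinate `p b`
  obtain ⟨b, hb, hmax⟩ := (s.filter (g · ≠ 0)).exists_max_image p ⟨b₀, by simp [hb₀, hg₀]⟩
  rw [mem_filter] at hb
  have hcoord : ∑ c ∈ s, g c * v c (p b) = 0 := by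
    simpa using congrFun hsum (p b)
  rw [sum_eq_single_of_mem b hb.1] at hcoord
  · exact (mul_ne_zero hb.2 (hne b)) hcoord
  intro c hc hcb
  by_cases hgc : g c = 0
  · simp [hgc]
  · have hlt : p c < p b :=
      (hmax c (mem_filter.2 ⟨hc, hgc⟩)).lt_of_ne (hp.ne hcb)
    simp [hzero c _ hlt]

theorem Matrix.rank_toBlock_mul_of_blockTriangular {l n R : Type*} [Fintype n] [LinearOrder n]
    [CommRing R] (A : Matrix l n R) {V : Matrix n n R} (hV : IsUnit V)
    (hVt : V.BlockTriangular id) (P : l → Prop) {Q : n → Prop} [DecidablePred Q]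
    (hQ : IsLowerSet {b | Q b}) :
    ((A * V).toBlock P Q).rank = (A.toBlock P Q).rank := by
  have hV0 : ∀ c, ¬Q c → ∀ b, Q b → V c b = 0 := fun c hc b hb =>
    hVt (lt_of_not_ge fun hcb => hc (hQ hcb hb))
  have hblock : V.toBlock (fun c => ¬Q c) Q = 0 := by
    ext c b
    exact hV0 c c.2 b b.2
  have hdet : IsUnit (V.toBlock Q Q).det := by
    rw [isUnit_iff_isUnit_det, twoBlockTriangular_det V Q hV0] at hV
    exact isUnit_of_mul_isUnit_left hV
  rw [toBlock_mul_eq_add P Q Q, hblock, Matrix.mul_zero, add_zero,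
    rank_mul_eq_left_of_isUnit_det _ _ hdet]

theorem card_quadrant_alternating_sum {α β : Type*} [LinearOrder α] [LinearOrder β]
    (S : Finset (α × β)) (i : α) (j : β) :
    (#{x ∈ S | i ≤ x.1 ∧ x.2 ≤ j} : ℤ) - #{x ∈ S | i < x.1 ∧ x.2 ≤ j}
      - #{x ∈ S | i ≤ x.1 ∧ x.2 < j} + #{x ∈ S | i < x.1 ∧ x.2 < j}
      = if (i, j) ∈ S then 1 else 0 := by
  simp only [natCast_card_filter, ← sum_sub_distrib, ← sum_add_distrib]
  rw [← sum_ite_eq S (i, j) (fun _ => (1 : ℤ))]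
  refine sum_congr rfl fun ⟨a, b⟩ _ => ?_
  simp only [Prod.mk.injEq]
  split_ifs <;> grind

section Pivots

variable {m : ℕ} {R : Matrix (Fin m) (Fin m) (ZMod 2)}

open Classical in
noncomputable def pivotPairing (R : Matrix (Fin m) (Fin m) (ZMod 2)) : Finset (Fin m × Fin m) :=
  {x | IsPivot R x.1 x.2}

@[simp]
theorem mem_pivotPairing {x : Fin m × Fin m} : x ∈ pivotPairing R ↔ IsPivot R x.1 x.2 := by
  simp [pivotPairing]

theorem exists_isPivot_of_ne_zero {a j : Fin m} (h : R a j ≠ 0) : ∃ i, a ≤ i ∧ IsPivot R i j := by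
  classical
  obtain ⟨i, hi, hmax⟩ := ({i | R i j ≠ 0} : Finset (Fin m)).exists_max_image id ⟨a, by simpa⟩
  refine ⟨i, hmax a (by simpa), by simpa using hi, fun i' hii' => ?_⟩
  by_contra h'
  exact absurd hii' (not_lt_of_ge (hmax i' (by simpa using h')))

theorem subRank_eq_rank_toBlock (M : Matrix (Fin m) (Fin m) (ZMod 2)) (P Q : Fin m → Prop)
    [DecidablePred P] [DecidablePred Q] : subRank M P Q = (M.toBlock P Q).rank :=
  rfl

theorem subRank_eq_card_pivotPairing (hred : Reduced R) (P Q : Fin m → Prop) [DecidablePred P]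
    [DecidablePred Q] (hP : IsUpperSet {a | P a}) :
    subRank R P Q = #{x ∈ pivotPairing R | P x.1 ∧ Q x.2} := by
  classical
  let ι := {x : Fin m × Fin m // IsPivot R x.1 x.2 ∧ P x.1 ∧ Q x.2}
  set M := R.toBlock P Q
  let pivotCol : ι → {a // P a} → ZMod 2 := fun x => M.col ⟨x.1.2, x.2.2.2⟩
  have hli : LinearIndependent (ZMod 2) pivotCol := by
    refine linearIndependent_of_injective_lastNonzero (fun x => ⟨x.1.1, x.2.2.1⟩) ?_
      (fun x => x.2.1.1) (fun x a hlt => x.2.1.2 a hlt)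
    intro x y hxy
    have hrow : x.1.1 = y.1.1 := congrArg Subtype.val hxy
    exact Subtype.ext (Prod.ext hrow (hred _ _ _ x.2.1 (hrow ▸ y.2.1)))
  have hspan : span (ZMod 2) (Set.range pivotCol) = span (ZMod 2) (Set.range M.col) := by
    refine le_antisymm (span_mono (Set.range_subset_iff.2 fun x => ⟨_, rfl⟩)) ?_
    rw [← span_sdiff_singleton_zero]
    refine span_mono ?_
    rintro _ ⟨⟨⟨b, hQb⟩, rfl⟩, hne⟩
    obtain ⟨⟨a, hPa⟩, hab⟩ : ∃ a, M a ⟨b, hQb⟩ ≠ 0 := by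
      by_contra! h
      exact hne (funext h)
    obtain ⟨i, hai, hpiv⟩ := exists_isPivot_of_ne_zero hab
    exact ⟨⟨(i, b), hpiv, hP hai hPa, hQb⟩, rfl⟩
  rw [subRank_eq_rank_toBlock, rank_eq_finrank_span_cols, ← hspan, finrank_span_eq_card hli,
    Fintype.card_subtype]
  congr 1
  ext x
  simp

end Pivots

/-- Pairing uniqueness: for a reduction `R = D·V`, column `j` of `R` is nonzero
with pivot `i` iff the alternating sum of ranks of the four lower-left
submatrices of `D` equals `1`.  In particular the pivot pairing of `R` is
determined by `D` alone. -/
theorem pivot_iff_rank_formula {m : ℕ}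
    (D V : Matrix (Fin m) (Fin m) (ZMod 2))
    (hVu : IsUnit V) (hVt : V.BlockTriangular id)
    (hred : Reduced (D * V)) (i j : Fin m) :
    IsPivot (D * V) i j ↔
      (subRank D (fun a => i ≤ a) (fun b => b ≤ j) : ℤ)
        - subRank D (fun a => i < a) (fun b => b ≤ j)
        - subRank D (fun a => i ≤ a) (fun b => b < j)
        + subRank D (fun a => i < a) (fun b => b < j) = 1 := by
  have hcount : ∀ (P Q : Fin m → Prop) [DecidablePred P] [DecidablePred Q],
      IsUpperSet {a | P a} → IsLowerSet {b | Q b} →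
        subRank D P Q = #{x ∈ pivotPairing (D * V) | P x.1 ∧ Q x.2} := by
    intro P Q _ _ hP hQ
    rw [← subRank_eq_card_pivotPairing hred P Q hP, subRank_eq_rank_toBlock,
      subRank_eq_rank_toBlock, rank_toBlock_mul_of_blockTriangular D hVu hVt P hQ]
  rw [hcount _ _ (isUpperSet_Ici i) (isLowerSet_Iic j),
    hcount _ _ (isUpperSet_Ioi i) (isLowerSet_Iic j),
    hcount _ _ (isUpperSet_Ici i) (isLowerSet_Iio j),
    hcount _ _ (isUpperSet_Ioi i) (isLowerSet_Iio j), card_quadrant_alternating_sum]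
  simp
end

section
/- Let R = D·V with V invertible upper triangular and R reduced, all over Z/2Z. Suppose column j of R is nonzero with pivot i, and let R' be obtained from R by adding to column j a linear combination of columns of R whose pivots are all strictly less than i. Then column j of R' is nonzero with pivot i, and if R' is reduced then R' has the same pivot pairing as R. -/
/-! Every column of `R` with pivot above row `i` vanishes from row `i` downwards, so the update
leaves column `j` unchanged in the rows that decide whether `i` is its pivot; all other columns
are untouched. The pairing therefore persists. -/

open Matrix

section

variable {m : ℕ} {M N : Matrix (Fin m) (Fin m) (ZMod 2)}

theorem IsPivot.eq {p i j : Fin m} (hp : IsPivot M p j) (hi : IsPivot M i j) : p = i := by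
  rcases lt_trichotomy p i with h | h | h
  · exact absurd (hp.2 i h) hi.1
  · exact h
  · exact absurd (hi.2 p h) hp.1

theorem IsPivot.isPivot_iff_eq {p i j : Fin m} (hi : IsPivot M i j) :
    IsPivot M p j ↔ p = i :=
  ⟨fun hp => hp.eq hi, fun h => h ▸ hi⟩

theorem isPivot_congr {p q : Fin m} (h : ∀ r, p ≤ r → M r q = N r q) :
    IsPivot M p q ↔ IsPivot N p q := by
  unfold IsPivot
  rw [h p le_rfl]
  refine and_congr_right fun _ => forall_congr' fun r => imp_congr_right fun hr => ?_
  rw [h r hr.le]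

theorem sum_mul_col_eq_zero_of_pivot_lt {i r : Fin m} (hr : i ≤ r) (c : Fin m → ZMod 2)
    (hc : ∀ k, c k ≠ 0 → ∃ p, IsPivot M p k ∧ p < i) :
    ∑ k, c k * M r k = 0 := by
  refine Finset.sum_eq_zero fun k _ => ?_
  by_cases hk : c k = 0
  · rw [hk, zero_mul]
  · obtain ⟨p, hp, hpi⟩ := hc k hk
    rw [hp.2 r (hpi.trans_le hr), mul_zero]

end

theorem add_lower_pivot_columns_preserves_pivot_general {m : ℕ}
    (R : Matrix (Fin m) (Fin m) (ZMod 2))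
    (i j : Fin m) (hpiv : IsPivot R i j)
    (c : Fin m → ZMod 2)
    (hc : ∀ k : Fin m, c k ≠ 0 → ∃ p : Fin m, IsPivot R p k ∧ p < i)
    (R' : Matrix (Fin m) (Fin m) (ZMod 2))
    (hR' : R' = R.updateCol j (fun r => R r j + ∑ k : Fin m, c k * R r k)) :
    IsPivot R' i j ∧
    (Reduced R' → ∀ p q : Fin m, IsPivot R' p q ↔ IsPivot R p q) := by
  subst hR'
  have hpiv' : IsPivot (R.updateCol j fun r => R r j + ∑ k, c k * R r k) i j := by
    refine (isPivot_congr fun r hr => ?_).mpr hpiv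
    rw [updateCol_self, sum_mul_col_eq_zero_of_pivot_lt hr c hc, add_zero]
  refine ⟨hpiv', fun _ p q => ?_⟩
  by_cases hq : q = j
  · subst hq
    rw [hpiv'.isPivot_iff_eq, hpiv.isPivot_iff_eq]
  · exact isPivot_congr fun r _ => updateCol_ne hq

/-- Adding to a column of a reduced matrix a linear combination of columns
whose pivots lie strictly above its own pivot does not change its pivot;
if the result is still reduced, its pivot pairing agrees with the original. -/
theorem add_lower_pivot_columns_preserves_pivot {m : ℕ}
    (D V R : Matrix (Fin m) (Fin m) (ZMod 2))
    (hVu : IsUnit V) (hVt : V.BlockTriangular id)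
    (hR : R = D * V) (hred : Reduced R)
    (i j : Fin m) (hpiv : IsPivot R i j)
    (c : Fin m → ZMod 2)
    (hc : ∀ k : Fin m, c k ≠ 0 → ∃ p : Fin m, IsPivot R p k ∧ p < i)
    (R' : Matrix (Fin m) (Fin m) (ZMod 2))
    (hR' : R' = R.updateCol j (fun r => R r j + ∑ k : Fin m, c k * R r k)) :
    IsPivot R' i j ∧
    (Reduced R' → ∀ p q : Fin m, IsPivot R' p q ↔ IsPivot R p q) :=
  add_lower_pivot_columns_preserves_pivot_general R i j hpiv c hc R' hR'
end

section
/- Let D be an m×m matrix over Z/2Z, V invertible upper triangular with R = D·V reduced. If column j of R is zero, then column j of V (viewed as a vector in (Z/2Z)^m) lies in the kernel of D, and the set of columns V[j] over all j with R[j] = 0 forms a basis of ker(D). -/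
open Matrix

/-! In a linear relation among columns with distinct pivots, the column with the highest pivot
is the only one with a nonzero entry in that row, so its coefficient vanishes; hence the nonzero
columns of `R = D * V` are independent. If `D (V y) = 0`, then `∑ y_j R_j = 0`, so `y_j = 0`
whenever `R_j ≠ 0`, and `V y` is a combination of the columns `V_j` with `R_j = 0`. These lie in
`ker D` because `R_j = D V_j`, and they are independent because `V` is invertible. -/

theorem linearIndependent_of_injective_pivot {R ι n : Type*} [Ring R] [NoZeroDivisors R]
    [LinearOrder n] {v : ι → n → R} {p : ι → n} (hp : Function.Injective p)
    (hpivot : ∀ j, v j (p j) ≠ 0) (hbelow : ∀ j i, p j < i → v j i = 0) :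
    LinearIndependent R v := by
  classical
  rw [linearIndependent_iff']
  intro s g hg
  by_contra! hne
  obtain ⟨j₀, hj₀, hmax⟩ := (s.filter fun j => g j ≠ 0).exists_max_image p
    (by simpa [Finset.filter_nonempty_iff] using hne)
  rw [Finset.mem_filter] at hj₀
  have hrow : ∑ j ∈ s, g j * v j (p j₀) = g j₀ * v j₀ (p j₀) := by
    refine Finset.sum_eq_single_of_mem j₀ hj₀.1 fun j hj hne => ?_
    by_cases hgj : g j = 0
    · rw [hgj, zero_mul]
    · have hlt : p j < p j₀ := (hmax j (by simp [hj, hgj])).lt_of_ne (hp.ne hne)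
      rw [hbelow j _ hlt, mul_zero]
  have hzero := congrFun hg (p j₀)
  simp only [Finset.sum_apply, Pi.smul_apply, smul_eq_mul, Pi.zero_apply, hrow] at hzero
  exact mul_ne_zero hj₀.2 (hpivot j₀) hzero

theorem exists_isPivot {m : ℕ} {M : Matrix (Fin m) (Fin m) (ZMod 2)} {j : Fin m}
    (h : Mᵀ j ≠ 0) : ∃ i, IsPivot M i j := by
  obtain ⟨i, hi⟩ := Function.ne_iff.mp h
  obtain ⟨i₀, hi₀, hmax⟩ := (Finset.univ.filter fun i => M i j ≠ 0).exists_max_image id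
    ⟨i, by simpa using hi⟩
  exact ⟨i₀, by simpa using hi₀,
    fun i' hlt => by_contra fun hi' => (hmax i' (by simpa using hi')).not_gt hlt⟩

theorem Reduced.linearIndependent_nonzero_cols {m : ℕ} {M : Matrix (Fin m) (Fin m) (ZMod 2)}
    (hM : Reduced M) :
    LinearIndependent (ZMod 2) (fun j : {j : Fin m // Mᵀ j ≠ 0} => Mᵀ j.1) := by
  choose p hp using fun j : {j : Fin m // Mᵀ j ≠ 0} => exists_isPivot j.2
  exact linearIndependent_of_injective_pivot
    (fun j j' h => Subtype.ext (hM _ _ _ (hp j) (by rw [h]; exact hp j'))) (fun j => (hp j).1)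
    (fun j => (hp j).2)

namespace Matrix

theorem transpose_mul_apply_eq_mulVec {α l m n : Type*} [NonUnitalNonAssocSemiring α] [Fintype m]
    (A : Matrix l m α) (B : Matrix m n α) (j : n) : (A * B)ᵀ j = A *ᵥ Bᵀ j :=
  rfl

theorem mulVec_eq_sum_smul_cols {α m n : Type*} [CommSemiring α] [Fintype n]
    (M : Matrix m n α) (v : n → α) : M *ᵥ v = ∑ j, v j • Mᵀ j := by
  simp [mulVec_eq_sum, op_smul_eq_smul]

theorem col_mem_ker_of_mul_col_eq_zero {α l m n : Type*} [CommSemiring α] [Fintype m]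
    {A : Matrix l m α} {B : Matrix m n α} {j : n} (h : (A * B)ᵀ j = 0) :
    Bᵀ j ∈ LinearMap.ker A.mulVecLin := by
  rwa [LinearMap.mem_ker, mulVecLin_apply, ← transpose_mul_apply_eq_mulVec]

end Matrix

theorem span_cols_at_zero_cols_eq_ker {K m n : Type*} [CommRing K] [Fintype n] [DecidableEq n]
    {D : Matrix m n K} {V : Matrix n n K} (hV : IsUnit V)
    (hR : LinearIndependent K (fun j : {j // (D * V)ᵀ j ≠ 0} => (D * V)ᵀ j.1)) :
    Submodule.span K (Set.range fun j : {j // (D * V)ᵀ j = 0} => Vᵀ j.1) =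
      LinearMap.ker D.mulVecLin := by
  classical
  apply le_antisymm
  · rw [Submodule.span_le]
    rintro _ ⟨j, rfl⟩
    exact col_mem_ker_of_mul_col_eq_zero j.2
  intro x hx
  obtain ⟨y, rfl⟩ := mulVec_surjective_iff_isUnit.mpr hV x
  have hy : ∀ j, (D * V)ᵀ j ≠ 0 → y j = 0 := by
    have hrel : (D * V) *ᵥ y = 0 := by rw [← mulVec_mulVec]; exact hx
    rw [mulVec_eq_sum_smul_cols,
      ← Fintype.sum_subtype_add_sum_subtype (fun j => (D * V)ᵀ j ≠ 0)] at hrel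
    have hzero_cols : ∑ j : {j // ¬(D * V)ᵀ j ≠ 0}, y j • (D * V)ᵀ j = 0 :=
      Finset.sum_eq_zero fun j _ => by rw [not_not.mp j.2, smul_zero]
    rw [hzero_cols, add_zero] at hrel
    exact fun j hj => Fintype.linearIndependent_iff.mp hR (fun j => y j) hrel ⟨j, hj⟩
  rw [mulVec_eq_sum_smul_cols]
  refine Submodule.sum_mem _ fun j _ => ?_
  by_cases hj : (D * V)ᵀ j = 0
  · exact Submodule.smul_mem _ _ (Submodule.subset_span ⟨⟨j, hj⟩, rfl⟩)
  · rw [hy j hj, zero_smul]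
    exact Submodule.zero_mem _

theorem kernel_basis_from_reduction_general {m : ℕ}
    (D V : Matrix (Fin m) (Fin m) (ZMod 2))
    (hVu : IsUnit V)
    (hred : Reduced (D * V)) :
    (∀ j : Fin m, (D * V)ᵀ j = 0 → Vᵀ j ∈ LinearMap.ker D.mulVecLin) ∧
    LinearIndependent (ZMod 2)
      (fun j : {j : Fin m // (D * V)ᵀ j = 0} => Vᵀ j.1) ∧
    Submodule.span (ZMod 2)
      (Set.range (fun j : {j : Fin m // (D * V)ᵀ j = 0} => Vᵀ j.1)) =
      LinearMap.ker D.mulVecLin :=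
  ⟨fun _ => col_mem_ker_of_mul_col_eq_zero,
    (linearIndependent_cols_iff_isUnit.mpr hVu).comp Subtype.val Subtype.val_injective,
    span_cols_at_zero_cols_eq_ker hVu hred.linearIndependent_nonzero_cols⟩

/-- For a reduction `R = D·V`, the columns of `V` indexed by the zero columns
of `R` lie in the kernel of `D`, are linearly independent, and span the
kernel of `D`: they form a basis of `ker D`. -/
theorem kernel_basis_from_reduction {m : ℕ}
    (D V : Matrix (Fin m) (Fin m) (ZMod 2))
    (hVu : IsUnit V) (hVt : V.BlockTriangular id)
    (hred : Reduced (D * V)) :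
    (∀ j : Fin m, (D * V)ᵀ j = 0 → Vᵀ j ∈ LinearMap.ker D.mulVecLin) ∧
    LinearIndependent (ZMod 2)
      (fun j : {j : Fin m // (D * V)ᵀ j = 0} => Vᵀ j.1) ∧
    Submodule.span (ZMod 2)
      (Set.range (fun j : {j : Fin m // (D * V)ᵀ j = 0} => Vᵀ j.1)) =
      LinearMap.ker D.mulVecLin :=
  kernel_basis_from_reduction_general D V hVu hred
end

section
/- Let R be a matrix over Z/2Z in which columns j < j' are the only columns sharing pivot p (all other nonzero columns have distinct pivots different from p). Then adding column j to column j' yields a matrix in which column j' has pivot strictly less than p or is zero, and if column j' becomes zero the resulting matrix is reduced. -/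
open Matrix

lemma pivot_unique {m : ℕ} {M : Matrix (Fin m) (Fin m) (ZMod 2)} {i i' q : Fin m}
    (h : IsPivot M i q) (h' : IsPivot M i' q) : i = i' := by
  rcases lt_trichotomy i i' with hlt | he | hgt
  · exact absurd (h.2 i' hlt) h'.1
  · exact he
  · exact absurd (h'.2 i hgt) h.1

/-- Suppose columns `j < j'` of `R` are the only two columns with pivot `p`
(all other nonzero columns have pairwise distinct pivots, all different from
`p`).  Adding column `j` to column `j'` yields a matrix in which column `j'`
is zero or has pivot strictly below `p`, and if column `j'` becomes zero then
the resulting matrix is reduced. -/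
theorem swap_columns_same_pivot {m : ℕ}
    (R : Matrix (Fin m) (Fin m) (ZMod 2)) (j j' p : Fin m) (hjj' : j < j')
    (hpj : IsPivot R p j) (hpj' : IsPivot R p j')
    (hothers_ne_p : ∀ q i : Fin m, q ≠ j → q ≠ j' → IsPivot R i q → i ≠ p)
    (hothers_distinct : ∀ q q' i : Fin m, q ≠ j → q ≠ j' → q' ≠ j → q' ≠ j' →
      IsPivot R i q → IsPivot R i q' → q = q')
    (R' : Matrix (Fin m) (Fin m) (ZMod 2))
    (hR' : R' = R.updateCol j' (fun i => R i j' + R i j)) :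
    ((R'ᵀ j' = 0) ∨ ∃ q : Fin m, IsPivot R' q j' ∧ q < p) ∧
    (R'ᵀ j' = 0 → Reduced R') := by
  have hcol : ∀ i, R' i j' = R i j' + R i j := by
    intro i; rw [hR', Matrix.updateCol_self]
  have hcolne : ∀ i q, q ≠ j' → R' i q = R i q := by
    intro i q hq; rw [hR', Matrix.updateCol_ne hq]
  have hzero : ∀ i, p ≤ i → R' i j' = 0 := by
    intro i hi
    have haux : ∀ a : ZMod 2, a ≠ 0 → a = 1 := by decide
    rcases eq_or_lt_of_le hi with rfl | hlt
    · rw [hcol, haux _ hpj'.1, haux _ hpj.1]; decide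
    · rw [hcol, hpj'.2 i hlt, hpj.2 i hlt, add_zero]
  constructor
  · by_cases hz : ∀ i, R' i j' = 0
    · left; funext i; exact hz i
    · right
      push_neg at hz
      obtain ⟨i0, hi0⟩ := hz
      set S : Finset (Fin m) := Finset.univ.filter (fun i => R' i j' ≠ 0) with hS
      have hne : S.Nonempty := ⟨i0, by simp [hS, hi0]⟩
      refine ⟨S.max' hne, ⟨?_, ?_⟩, ?_⟩
      · have := S.max'_mem hne
        simpa [hS] using this
      · intro i' hi'
        by_contra h
        exact absurd (S.le_max' i' (by simp [hS, h])) (not_le.mpr hi')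
      · by_contra h
        push_neg at h
        have := S.max'_mem hne
        simp only [hS, Finset.mem_filter] at this
        exact this.2 (hzero _ h)
  · intro hz
    have hz' : ∀ i, R' i j' = 0 := fun i => congrFun hz i
    intro i q q' hq hq'
    have hnj' : ∀ {i q : Fin m}, IsPivot R' i q → q ≠ j' := by
      intro i q h hqe; subst hqe; exact h.1 (hz' i)
    have hq1 := hnj' hq
    have hq1' := hnj' hq'
    have hRq : IsPivot R i q := ⟨by rw [← hcolne i q hq1]; exact hq.1,
      fun i' hi' => by rw [← hcolne i' q hq1]; exact hq.2 i' hi'⟩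
    have hRq' : IsPivot R i q' := ⟨by rw [← hcolne i q' hq1']; exact hq'.1,
      fun i' hi' => by rw [← hcolne i' q' hq1']; exact hq'.2 i' hi'⟩
    by_cases h1 : q = j
    · subst h1
      have hip : i = p := pivot_unique hRq hpj
      by_cases h2 : q' = q
      · exact h2.symm
      · exact absurd (hip ▸ hothers_ne_p q' i h2 hq1' hRq') (by simp [hip])
    · by_cases h2 : q' = j
      · subst h2
        have hip : i = p := pivot_unique hRq' hpj
        exact absurd (hip ▸ hothers_ne_p q i h1 hq1 hRq) (by simp [hip])
      · exact hothers_distinct q q' i h1 hq1 h2 hq1' hRq hRq'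
end
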